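/- arXiv:math/0606539 — 2 statements merged into one kernel-verified Lean document; each statement's English description precedes it below -/
import Mathlib

section
/- If E is a v-leaf of a hypergraph H (i.e., E contains a vertex belonging to no other edge of H), and H has at least two edges, then E is a splitting edge of H. -/
open Finset
open scoped Classical

noncomputable section

/-- A simple hypergraph: all edges have at least two vertices and no edge contains another. -/
structure SimpleHypergraph (V : Type*) where
  edges : Finset (Finset V)
  card_ge : ∀ e ∈ edges, 2 ≤ e.card
  antichain : ∀ e ∈ edges, ∀ f ∈ edges, e ⊆ f → e = f

variable {V : Type*} [DecidableEq V]

/-- A chain `(E₀, x₁, E₁, …, xₙ, Eₙ)` in a hypergraph, recorded as the list of its edges;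
the vertex conditions amount to `xₖ ∈ Eₖ₋₁ ∩ Eₖ`. -/
def IsHChain (H : SimpleHypergraph V) (l : List (Finset V)) : Prop :=
  l ≠ [] ∧ l.Nodup ∧ (∀ e ∈ l, e ∈ H.edges) ∧
  ∃ xs : List V, xs.Nodup ∧ xs.length + 1 = l.length ∧
    ∀ i, (h : i < xs.length) → xs.get ⟨i, h⟩ ∈ l.getD i ∅ ∩ l.getD (i+1) ∅

/-- A proper chain: `|Eᵢ ∩ Eᵢ₊₁| = |Eᵢ₊₁| - 1` for all `i`. -/
def IsProperChain (H : SimpleHypergraph V) (l : List (Finset V)) : Prop :=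
  IsHChain H l ∧ ∀ i, i + 1 < l.length →
    (l.getD i ∅ ∩ l.getD (i+1) ∅).card + 1 = (l.getD (i+1) ∅).card

/-- A proper irredundant chain: no proper subsequence with the same endpoints is a proper
chain. -/
def IsPIChain (H : SimpleHypergraph V) (l : List (Finset V)) : Prop :=
  IsProperChain H l ∧ ∀ l' : List (Finset V), l'.Sublist l → l' ≠ l →
    l'.head? = l.head? → l'.getLast? = l.getLast? → ¬ IsProperChain H l'

/-- The distance between two edges: minimal length of a proper irredundant chain
from `E` to `F` (`∞` if there is none). -/
def edgeDist (H : SimpleHypergraph V) (E F : Finset V) : ℕ∞ :=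
  sInf ((fun l : List (Finset V) => ((l.length - 1 : ℕ) : ℕ∞)) ''
    {l | IsPIChain H l ∧ l.head? = some E ∧ l.getLast? = some F})

/-- A `d`-uniform properly-connected hypergraph. -/
def UniformPC (H : SimpleHypergraph V) (d : ℕ) : Prop :=
  (∀ e ∈ H.edges, e.card = d) ∧
  ∀ E ∈ H.edges, ∀ F ∈ H.edges, (E ∩ F).Nonempty →
    edgeDist H E F = ((d - (E ∩ F).card : ℕ) : ℕ∞)

/-- The sub-hypergraph consisting of the edges satisfying `P`. -/
def SimpleHypergraph.restrict (H : SimpleHypergraph V) (P : Finset V → Prop) :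
    SimpleHypergraph V where
  edges := H.edges.filter P
  card_ge := fun e he => H.card_ge e (Finset.mem_filter.mp he).1
  antichain := fun e he f hf hef =>
    H.antichain e (Finset.mem_filter.mp he).1 f (Finset.mem_filter.mp hf).1 hef

/-- The vertex neighbor set `N(E)` of an edge: union of `F \ E` over edges at distance 1. -/
def nbrSet (H : SimpleHypergraph V) (E : Finset V) : Finset V :=
  (H.edges.filter fun F => edgeDist H E F = 1).sup fun F => F \ E

variable (k : Type*) [Field k]

/-- The squarefree monomial attached to an edge. -/
def edgeMonomial (E : Finset V) : MvPolynomial V k := ∏ x ∈ E, MvPolynomial.X x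

/-- The edge ideal of a hypergraph. -/
def edgeIdeal (H : SimpleHypergraph V) : Ideal (MvPolynomial V k) :=
  Ideal.span ((fun E => edgeMonomial k E) '' ↑H.edges)

/-- The exponent vector of the squarefree monomial attached to an edge. -/
def mexp (E : Finset V) : V →₀ ℕ := ∑ x ∈ E, Finsupp.single x 1

/-- The minimal monomials (w.r.t. divisibility) among a finite set of monomials;
these are the minimal generators of the monomial ideal they generate. -/
def minMon (A : Finset (V →₀ ℕ)) : Finset (V →₀ ℕ) :=
  A.filter fun m => ∀ m' ∈ A, m' ≤ m → m' = m

/-- Minimal generators of `J ∩ K`, where `J`, `K` are the monomial ideals with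
(minimal) monomial generators `A`, `B`: minimal elements among the pairwise lcm's. -/
def interMin (A B : Finset (V →₀ ℕ)) : Finset (V →₀ ℕ) :=
  minMon ((A ×ˢ B).image fun p => p.1 ⊔ p.2)

/-- Eliahou–Kervaire splitting: the monomial ideal generated by `A ∪ B` is split as
the sum of the ideals generated by `A` and by `B`. -/
def IsSplitting (A B : Finset (V →₀ ℕ)) : Prop :=
  A.Nonempty ∧ B.Nonempty ∧ Disjoint A B ∧
  (∀ m ∈ A ∪ B, ∀ m' ∈ A ∪ B, m' ≤ m → m' = m) ∧
  ∃ φ ψ : (V →₀ ℕ) → (V →₀ ℕ),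
    (∀ w ∈ interMin A B, φ w ∈ A ∧ ψ w ∈ B ∧ w = φ w ⊔ ψ w) ∧
    ∀ S ⊆ interMin A B, S.Nonempty → S.sup φ < S.sup id ∧ S.sup ψ < S.sup id

/-- A splitting edge of a hypergraph: `I(H) = (x^E) + I(H \ E)` is a splitting. -/
def IsSplittingEdge (H : SimpleHypergraph V) (E : Finset V) : Prop :=
  E ∈ H.edges ∧ IsSplitting {mexp E} ((H.edges.erase E).image mexp)

variable [LinearOrder V]

/-- Total degree of a monomial. -/
def mdeg (m : V →₀ ℕ) : ℕ := m.sum fun _ e => e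

/-- Basis of the degree-`j` part of the `i`-th term of the Taylor complex of the monomial
ideal generated by `G`: `i`-element subsets of `G` whose lcm has degree `j`. -/
def TaylorIndex (G : Finset (V →₀ ℕ)) (i j : ℕ) : Finset (Finset (V →₀ ℕ)) :=
  G.powerset.filter fun S => S.card = i ∧ mdeg (S.sup id) = j

/-- Matrix of the Taylor-complex differential `T_{i+1} → T_i` reduced mod the maximal
ideal, in homological degree-`j` graded part. -/
def taylorMatrix (G : Finset (V →₀ ℕ)) (i j : ℕ) :
    Matrix (TaylorIndex G i j) (TaylorIndex G (i+1) j) k :=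
  fun S' S =>
    if (S' : Finset (V →₀ ℕ)) ⊆ (S : Finset (V →₀ ℕ)) ∧
        (S' : Finset (V →₀ ℕ)).sup id = (S : Finset (V →₀ ℕ)).sup id then
      ∑ m ∈ (S : Finset (V →₀ ℕ)) \ (S' : Finset (V →₀ ℕ)),
        (-1 : k) ^ ((S' : Finset (V →₀ ℕ)).filter fun a => toLex a < toLex m).card
    else 0

/-- The Taylor-complex differential reduced mod the maximal ideal. -/
def taylorBoundary (G : Finset (V →₀ ℕ)) (i j : ℕ) :
    ((TaylorIndex G (i+1) j) → k) →ₗ[k] ((TaylorIndex G i j) → k) :=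
  Matrix.mulVecLin (taylorMatrix k G i j)

/-- The graded Betti number `β_{i,j}` of the monomial ideal generated by `G`, computed as
the dimension of the degree-`j` part of the `i`-th homology of the Taylor complex tensored
with the residue field. -/
def monomialBetti (G : Finset (V →₀ ℕ)) (i j : ℕ) : ℕ :=
  Module.finrank k (LinearMap.ker (taylorBoundary k G i j)) -
  Module.finrank k (LinearMap.range (taylorBoundary k G (i+1) j))

/-- Castelnuovo–Mumford regularity of the monomial ideal generated by `G`. -/
def monReg (G : Finset (V →₀ ℕ)) : ℕ :=
  sSup {r | ∃ i j, monomialBetti k G i j ≠ 0 ∧ r + i = j}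

/-- Projective dimension of the monomial ideal generated by `G`. -/
def monPdim (G : Finset (V →₀ ℕ)) : ℕ :=
  sSup {i | ∃ j, monomialBetti k G i j ≠ 0}

/-- Graded Betti numbers of the edge ideal of a hypergraph. -/
def edgeBetti (H : SimpleHypergraph V) (i j : ℕ) : ℕ :=
  monomialBetti k (H.edges.image mexp) i j

/-- Regularity of the edge ideal of a hypergraph. -/
def edgeReg (H : SimpleHypergraph V) : ℕ :=
  monReg k (H.edges.image mexp)


lemma mexp_apply' {V : Type*} [DecidableEq V] (E : Finset V) (a : V) :
    mexp E a = if a ∈ E then 1 else 0 := by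
  classical
  simp [mexp, Finsupp.finset_sum_apply, Finsupp.single_apply]

lemma mexp_le_iff' {V : Type*} [DecidableEq V] {E F : Finset V} :
    mexp E ≤ mexp F ↔ E ⊆ F := by
  classical
  constructor
  · intro h x hx
    have := h x
    rw [mexp_apply', mexp_apply'] at this
    simp [hx] at this
    split at this
    · assumption
    · omega
  · intro h x
    rw [mexp_apply', mexp_apply']
    by_cases hx : x ∈ E
    · rw [if_pos hx, if_pos (h hx)]
    · simp [hx]

lemma mexp_inj' {V : Type*} [DecidableEq V] {E F : Finset V} (h : mexp E = mexp F) :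
    E = F := by
  apply Finset.Subset.antisymm <;> rw [← mexp_le_iff']
  · exact le_of_eq h
  · exact le_of_eq h.symm

theorem isSplittingEdge_of_vleaf {V : Type*} [DecidableEq V]
    (H : SimpleHypergraph V) (h2 : 2 ≤ H.edges.card) (E : Finset V) (hE : E ∈ H.edges)
    (hleaf : ∃ v ∈ E, ∀ F ∈ H.edges, F ≠ E → v ∉ F) :
    IsSplittingEdge H E := by
  classical
  obtain ⟨v, hvE, hvfree⟩ := hleaf
  set A : Finset (V →₀ ℕ) := {mexp E} with hA
  set B : Finset (V →₀ ℕ) := (H.edges.erase E).image mexp with hB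
  -- basic facts about B
  have hBmem : ∀ b ∈ B, ∃ F ∈ H.edges, F ≠ E ∧ b = mexp F := by
    intro b hb
    obtain ⟨F, hF, rfl⟩ := Finset.mem_image.mp hb
    obtain ⟨hne, hFe⟩ := Finset.mem_erase.mp hF
    exact ⟨F, hFe, hne, rfl⟩
  have hErase : (H.edges.erase E).Nonempty := by
    rw [← Finset.card_pos, Finset.card_erase_of_mem hE]
    omega
  refine ⟨hE, Finset.singleton_nonempty _, hErase.image _, ?_, ?_, ?_⟩
  · -- Disjoint
    rw [Finset.disjoint_singleton_left]
    intro hmem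
    obtain ⟨F, _, hne, hEF⟩ := hBmem _ hmem
    exact hne (mexp_inj' hEF).symm
  · -- antichain of generators
    intro m hm m' hm' hle
    have hedge : ∀ n ∈ A ∪ B, ∃ G ∈ H.edges, n = mexp G := by
      intro n hn
      rcases Finset.mem_union.mp hn with hn | hn
      · exact ⟨E, hE, (Finset.mem_singleton.mp hn)⟩
      · obtain ⟨G, hG, _, h⟩ := hBmem _ hn
        exact ⟨G, hG, h⟩
    obtain ⟨G, hG, rfl⟩ := hedge m hm
    obtain ⟨G', hG', rfl⟩ := hedge m' hm'
    rw [mexp_le_iff'] at hle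
    rw [H.antichain G' hG' G hG hle]
  · -- splitting function
    have hInter : ∀ w ∈ interMin A B, ∃ b, b ∈ B ∧ w = mexp E ⊔ b := by
      intro w hw
      have hw' := Finset.mem_filter.mp hw
      obtain ⟨p, hp, rfl⟩ := Finset.mem_image.mp hw'.1
      obtain ⟨hp1, hp2⟩ := Finset.mem_product.mp hp
      rw [hA, Finset.mem_singleton] at hp1
      exact ⟨p.2, hp2, by rw [hp1]⟩
    have hInter' : ∀ w, ∃ b, w ∈ interMin A B → b ∈ B ∧ w = mexp E ⊔ b := by
      intro w
      by_cases hw : w ∈ interMin A B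
      · obtain ⟨b, hb1, hb2⟩ := hInter w hw
        exact ⟨b, fun _ => ⟨hb1, hb2⟩⟩
      · exact ⟨0, fun h => absurd h hw⟩
    choose ψ hψ using hInter'
    refine ⟨fun _ => mexp E, ψ, ?_, ?_⟩
    · intro w hw
      exact ⟨Finset.mem_singleton_self _, (hψ w hw).1, (hψ w hw).2⟩
    · intro S hS hSne
      obtain ⟨w₀, hw₀S⟩ := hSne
      have hw₀ := hInter w₀ (hS hw₀S)
      have hdom : ∀ w ∈ S, mexp E ≤ w := by
        intro w hw
        obtain ⟨b, _, rfl⟩ := hInter w (hS hw)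
        exact le_sup_left
      have hsupid : ∀ w ∈ S, w ≤ S.sup id := fun w hw => Finset.le_sup (f := id) hw
      constructor
      · -- S.sup φ < S.sup id
        have hle : S.sup (fun _ => mexp E) ≤ S.sup id := by
          apply Finset.sup_le
          intro w hw
          exact le_trans (hdom w hw) (hsupid w hw)
        refine lt_of_le_of_ne hle ?_
        intro heq
        have hconst : S.sup (fun _ => mexp E) = mexp E :=
          Finset.sup_const ⟨w₀, hw₀S⟩ _
        obtain ⟨b, hbB, hw₀eq⟩ := hw₀
        obtain ⟨F, hFedge, hFne, rfl⟩ := hBmem b hbB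
        have hFsub : F ⊆ E := by
          rw [← mexp_le_iff']
          calc mexp F ≤ w₀ := hw₀eq ▸ le_sup_right
            _ ≤ S.sup id := hsupid w₀ hw₀S
            _ = mexp E := by rw [← heq, hconst]
        exact hFne (H.antichain F hFedge E hE hFsub)
      · -- S.sup ψ < S.sup id
        have hψle : ∀ w ∈ S, ψ w ≤ w := by
          intro w hw
          calc ψ w ≤ mexp E ⊔ ψ w := le_sup_right
            _ = w := ((hψ w (hS hw)).2).symm
        have hψv : ∀ w ∈ S, ψ w v = 0 := by
          intro w hw
          obtain ⟨F, hFedge, hFne, hb⟩ := hBmem _ (hψ w (hS hw)).1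
          rw [hb, mexp_apply', if_neg (hvfree F hFedge hFne)]
        have hle : S.sup ψ ≤ S.sup id :=
          Finset.sup_le fun w hw => le_trans (hψle w hw) (hsupid w hw)
        refine lt_of_le_of_ne hle ?_
        intro heq
        have h1 : (S.sup id) v ≠ 0 := by
          have h2 : mexp E ≤ S.sup id := le_trans (hdom w₀ hw₀S) (hsupid w₀ hw₀S)
          have h3 := h2 v
          rw [mexp_apply', if_pos hvE] at h3
          omega
        have h0 : (S.sup ψ) v = 0 := by
          have hub : S.sup ψ ≤ Finsupp.update (S.sup id) v 0 := by
            apply Finset.sup_le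
            intro w hw
            intro x
            by_cases hx : x = v
            · subst hx; rw [hψv w hw]; exact Nat.zero_le _
            · have hx' : ((S.sup id).update v 0) x = (S.sup id) x := by
                simp [Finsupp.coe_update, Function.update_apply, hx]
              rw [hx']
              exact le_trans ((hψle w hw) x) ((hsupid w hw) x)
          have := hub v
          simp [Finsupp.coe_update] at this
          omega
        rw [heq] at h0
        exact h1 h0
end
end

section
/- Let H be a d-uniform properly-connected hypergraph, E any edge, and H' = {K edge of H : dist_H(E, K) ≥ d+1}. Then the sub-hypergraph H' is also a d-uniform properly-connected hypergraph. -/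
/-!
Write `t = |A ∩ B|` for edges `A, B` of `H'`. Every `d`-uniform hypergraph satisfies
`dist(A, B) ≥ d - t`, since `|Eᵢ ∩ B|` grows by at most one per step of a proper chain; the
same count applied to `A` and to `B` shows that every edge of a chain of length `d - t` from `A`
to `B` in `H` lies inside `A ∪ B`. It remains to see that such an edge `e` is far from `E`.
Both `A` and `B` are disjoint from `E`, hence so is `e`; if `dist(E, e) ≤ d`, the second edge `K`
of a shortest chain from `E` to `e` shares `d - 1` vertices with `E` and meets `e`, hence meets
`A`, say. Prepending `E` to a shortest chain from `K` to `A` gives a proper chain of length at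
most `d` from `E` to `A`, a contradiction.
-/

open Finset
open scoped Classical

noncomputable section

variable {V : Type*} [DecidableEq V]

lemma List.getD_zero_of_head?_eq_some {α : Type*} {l : List α} {a d : α}
    (h : l.head? = some a) : l.getD 0 d = a := by
  obtain ⟨t, rfl⟩ := List.head?_eq_some_iff.mp h
  rfl

lemma List.getD_length_sub_one_of_getLast?_eq_some {α : Type*} {l : List α} {a d : α}
    (h : l.getLast? = some a) : l.getD (l.length - 1) d = a := by
  rw [List.getLast?_eq_getElem?] at h
  simp [List.getD_eq_getElem?_getD, h]

lemma Finset.card_inter_le_card_inter_add_one {α : Type*} [DecidableEq α] {A B : Finset α}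
    (S : Finset α) (h : B.card ≤ (A ∩ B).card + 1) : (B ∩ S).card ≤ (A ∩ S).card + 1 :=
  calc (B ∩ S).card ≤ ((A ∩ S) ∪ (B \ A)).card :=
        card_le_card fun x => by simp only [mem_inter, mem_union, mem_sdiff]; tauto
    _ ≤ (A ∩ S).card + (B \ A).card := card_union_le _ _
    _ ≤ (A ∩ S).card + 1 := by rw [card_sdiff]; omega

lemma SimpleHypergraph.mem_restrict_edges {W : Type*} {H : SimpleHypergraph W}
    {P : Finset W → Prop} {e : Finset W} : e ∈ (H.restrict P).edges ↔ e ∈ H.edges ∧ P e :=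
  mem_filter

section Chains

variable {H : SimpleHypergraph V} {l : List (Finset V)} {d : ℕ} {A B E K e : Finset V}

lemma IsHChain.length_pos (hl : IsHChain H l) : 0 < l.length :=
  List.length_pos_iff.mpr hl.1

lemma IsHChain.mem_edges (hl : IsHChain H l) (he : e ∈ l) : e ∈ H.edges :=
  hl.2.2.1 e he

lemma IsHChain.getD_mem_edges (hl : IsHChain H l) {i : ℕ} (hi : i < l.length) :
    l.getD i ∅ ∈ H.edges := by
  rw [List.getD_eq_getElem _ _ hi]
  exact hl.mem_edges (l.getElem_mem hi)

lemma isHChain_restrict_iff {P : Finset V → Prop} :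
    IsHChain (H.restrict P) l ↔ IsHChain H l ∧ ∀ e ∈ l, P e := by
  simp only [IsHChain, SimpleHypergraph.mem_restrict_edges]
  grind

lemma isProperChain_restrict_iff {P : Finset V → Prop} :
    IsProperChain (H.restrict P) l ↔ IsProperChain H l ∧ ∀ e ∈ l, P e := by
  simp only [IsProperChain, isHChain_restrict_iff]
  tauto

lemma IsPIChain.restrict {P : Finset V → Prop} (hl : IsPIChain H l) (hP : ∀ e ∈ l, P e) :
    IsPIChain (H.restrict P) l :=
  ⟨isProperChain_restrict_iff.mpr ⟨hl.1, hP⟩, fun l' hsub hne hh hla hl' =>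
    hl.2 l' hsub hne hh hla (isProperChain_restrict_iff.mp hl').1⟩

lemma IsProperChain.card_inter_getD_le (huni : ∀ e ∈ H.edges, e.card = d)
    (hl : IsProperChain H l) (S : Finset V) {i j : ℕ} (hij : i ≤ j) (hj : j < l.length) :
    (l.getD j ∅ ∩ S).card ≤ (l.getD i ∅ ∩ S).card + (j - i) ∧
      (l.getD i ∅ ∩ S).card ≤ (l.getD j ∅ ∩ S).card + (j - i) := by
  induction j, hij using Nat.le_induction with
  | base => simp
  | succ j hij ih =>
    have hstep := hl.2 j hj
    have hcard := huni _ (hl.1.getD_mem_edges (i := j) (by omega))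
    have hcard' := huni _ (hl.1.getD_mem_edges hj)
    have hfwd := card_inter_le_card_inter_add_one S (A := l.getD j ∅) (B := l.getD (j + 1) ∅)
      (by omega)
    have hbwd := card_inter_le_card_inter_add_one S (A := l.getD (j + 1) ∅) (B := l.getD j ∅)
      (by rw [inter_comm]; omega)
    have := ih (by omega)
    omega

lemma IsProperChain.exists_isPIChain_sublist (hl : IsProperChain H l) :
    ∃ l', l'.Sublist l ∧ l'.head? = l.head? ∧ l'.getLast? = l.getLast? ∧ IsPIChain H l' := by
  induction hn : l.length using Nat.strong_induction_on generalizing l with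
  | _ n ih =>
  by_cases hirr : ∀ l', l'.Sublist l → l' ≠ l → l'.head? = l.head? →
      l'.getLast? = l.getLast? → ¬ IsProperChain H l'
  · exact ⟨l, .refl l, rfl, rfl, hl, hirr⟩
  push Not at hirr
  obtain ⟨l', hsub, hne, hh, hla, hl'⟩ := hirr
  have hlt : l'.length < n := hn ▸ lt_of_le_of_ne hsub.length_le (mt hsub.eq_of_length hne)
  obtain ⟨l'', hsub', hh', hla', hpi⟩ := ih _ hlt hl' rfl
  exact ⟨l'', hsub'.trans hsub, hh'.trans hh, hla'.trans hla, hpi⟩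

lemma edgeDist_le_of_isPIChain (hl : IsPIChain H l) (hh : l.head? = some A)
    (hla : l.getLast? = some B) : edgeDist H A B ≤ (l.length - 1 : ℕ) :=
  sInf_le ⟨l, ⟨hl, hh, hla⟩, rfl⟩

lemma edgeDist_le_of_isProperChain (hl : IsProperChain H l) (hh : l.head? = some A)
    (hla : l.getLast? = some B) : edgeDist H A B ≤ (l.length - 1 : ℕ) := by
  obtain ⟨l', hsub, hh', hla', hpi⟩ := hl.exists_isPIChain_sublist
  calc edgeDist H A B ≤ (l'.length - 1 : ℕ) :=
        edgeDist_le_of_isPIChain hpi (hh'.trans hh) (hla'.trans hla)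
    _ ≤ (l.length - 1 : ℕ) := by gcongr; exact hsub.length_le

lemma exists_isPIChain_of_edgeDist_le {c : ℕ} (h : edgeDist H A B ≤ c) :
    ∃ l, IsPIChain H l ∧ l.head? = some A ∧ l.getLast? = some B ∧ l.length ≤ c + 1 := by
  by_contra! hlong
  have hge : ((c + 1 : ℕ) : ℕ∞) ≤ edgeDist H A B := by
    refine le_sInf ?_
    rintro _ ⟨l, ⟨hpi, hh, hla⟩, rfl⟩
    have := hlong l hpi hh hla
    exact Nat.cast_le.mpr (by omega)
  have := hge.trans h
  norm_cast at this
  omega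

lemma natCast_sub_card_inter_le_edgeDist (huni : ∀ e ∈ H.edges, e.card = d) (A B : Finset V) :
    ((d - (A ∩ B).card : ℕ) : ℕ∞) ≤ edgeDist H A B := by
  refine le_sInf ?_
  rintro _ ⟨l, ⟨hpi, hh, hla⟩, rfl⟩
  have hpos := hpi.1.1.length_pos
  have hA : l.getD 0 ∅ = A := List.getD_zero_of_head?_eq_some hh
  have hB : l.getD (l.length - 1) ∅ = B := List.getD_length_sub_one_of_getLast?_eq_some hla
  have hBcard : B.card = d := huni B (hB ▸ hpi.1.1.getD_mem_edges (by omega))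
  have := (hpi.1.card_inter_getD_le huni B (Nat.zero_le _) (Nat.sub_one_lt_of_lt hpos)).1
  rw [hA, hB, inter_self, hBcard] at this
  exact Nat.cast_le.mpr (by omega)

lemma IsHChain.cons (hl : IsHChain H l) (hE : E ∈ H.edges) (hEl : E ∉ l)
    (hh : l.head? = some K) (hla : l.getLast? = some B) (hEB : Disjoint E B)
    (hEK : (E ∩ K).Nonempty) (hlen : l.length ≤ (E ∩ K).card + 1) : IsHChain H (E :: l) := by
  obtain ⟨hnil, hnd, hedges, xs, hxnd, hxlen, hxmem⟩ := hl
  -- the last chain vertex lies in `B`, so it is not in `E ∩ K`; this leaves room for a new one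
  have hfresh : ∃ x ∈ E ∩ K, x ∉ xs := by
    rcases xs.eq_nil_or_concat' with rfl | ⟨ys, w, rfl⟩
    · obtain ⟨x, hx⟩ := hEK
      exact ⟨x, hx, List.not_mem_nil⟩
    · simp only [List.length_append, List.length_singleton] at hxlen
      have hB : l.getD (ys.length + 1) ∅ = B := by
        have := List.getD_length_sub_one_of_getLast?_eq_some (d := ∅) hla
        rwa [show l.length - 1 = ys.length + 1 by omega] at this
      have hw : w ∈ B := by
        have := (mem_inter.mp (hxmem ys.length (by simp))).2
        rw [hB] at this
        simpa using this
      obtain ⟨x, hx, hxys⟩ := exists_mem_notMem_of_card_lt_card (s := ys.toFinset) (t := E ∩ K)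
        (by have := ys.toFinset_card_le; omega)
      refine ⟨x, hx, ?_⟩
      simp only [List.mem_append, List.mem_singleton, not_or]
      exact ⟨by simpa using hxys, by rintro rfl; exact disjoint_left.mp hEB (mem_inter.mp hx).1 hw⟩
  obtain ⟨x, hx, hxxs⟩ := hfresh
  refine ⟨List.cons_ne_nil _ _, List.nodup_cons.mpr ⟨hEl, hnd⟩,
    List.forall_mem_cons.mpr ⟨hE, hedges⟩, x :: xs, List.nodup_cons.mpr ⟨hxxs, hxnd⟩,
    by simpa using hxlen, ?_⟩
  rintro (_ | i) hi
  · show x ∈ E ∩ l.getD 0 ∅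
    rwa [List.getD_zero_of_head?_eq_some hh]
  · simpa using hxmem i (by simpa using hi)

lemma IsProperChain.cons (hl : IsProperChain H l) (hE : E ∈ H.edges) (hEl : E ∉ l)
    (hh : l.head? = some K) (hla : l.getLast? = some B) (hEB : Disjoint E B)
    (hEK : (E ∩ K).card + 1 = K.card) (hlen : l.length ≤ K.card) :
    IsProperChain H (E :: l) := by
  have hK : K ∈ H.edges :=
    List.getD_zero_of_head?_eq_some (d := ∅) hh ▸ hl.1.getD_mem_edges hl.1.length_pos
  have hEK' : (E ∩ K).Nonempty := card_pos.mp (by have := H.card_ge K hK; omega)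
  refine ⟨hl.1.cons hE hEl hh hla hEB hEK' (by omega), ?_⟩
  rintro (_ | i) hi
  · show (E ∩ l.getD 0 ∅).card + 1 = (l.getD 0 ∅).card
    rwa [List.getD_zero_of_head?_eq_some hh]
  · simpa using hl.2 i (by simpa using hi)

lemma IsProperChain.notMem_of_disjoint (huni : ∀ e ∈ H.edges, e.card = d)
    (hl : IsProperChain H l) (hla : l.getLast? = some B) (hlen : l.length ≤ d)
    (hEB : Disjoint E B) : E ∉ l := by
  intro hE
  obtain ⟨i, hi, rfl⟩ := List.getElem_of_mem hE
  have hB : l.getD (l.length - 1) ∅ = B := List.getD_length_sub_one_of_getLast?_eq_some hla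
  have hBcard : B.card = d := huni B (hB ▸ hl.1.getD_mem_edges (by omega))
  have := (hl.card_inter_getD_le huni B (i := i) (j := l.length - 1) (by omega) (by omega)).1
  rw [hB, inter_self, List.getD_eq_getElem _ _ hi, disjoint_iff_inter_eq_empty.mp hEB,
    card_empty, hBcard] at this
  omega

lemma IsProperChain.subset_union (huni : ∀ e ∈ H.edges, e.card = d) (hl : IsProperChain H l)
    (hh : l.head? = some A) (hla : l.getLast? = some B)
    (hlen : l.length ≤ d - (A ∩ B).card + 1) (he : e ∈ l) : e ⊆ A ∪ B := by
  obtain ⟨i, hi, rfl⟩ := List.getElem_of_mem he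
  rw [← List.getD_eq_getElem _ ∅ hi]
  have hA : l.getD 0 ∅ = A := List.getD_zero_of_head?_eq_some hh
  have hB : l.getD (l.length - 1) ∅ = B := List.getD_length_sub_one_of_getLast?_eq_some hla
  have hAcard : A.card = d := huni A (hA ▸ hl.1.getD_mem_edges (by omega))
  have hBcard : B.card = d := huni B (hB ▸ hl.1.getD_mem_edges (by omega))
  have hecard : (l.getD i ∅).card = d := huni _ (hl.1.getD_mem_edges hi)
  have hnearA := (hl.card_inter_getD_le huni A (Nat.zero_le i) hi).2
  have hnearB := (hl.card_inter_getD_le huni B (i := i) (j := l.length - 1) (by omega)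
    (by omega)).1
  rw [hA, inter_self] at hnearA
  rw [hB, inter_self] at hnearB
  have hAB : (A ∩ B).card ≤ d := hAcard ▸ card_le_card inter_subset_left
  have hunion := card_union_add_card_inter (l.getD i ∅ ∩ A) (l.getD i ∅ ∩ B)
  have hcommon : (l.getD i ∅ ∩ A ∩ (l.getD i ∅ ∩ B)).card ≤ (A ∩ B).card :=
    card_le_card fun x => by simp only [mem_inter]; tauto
  rw [← inter_union_distrib_left] at hunion
  rw [← inter_eq_left]
  exact eq_of_subset_of_card_le inter_subset_left (by omega)

lemma IsProperChain.exists_step_inter_nonempty (huni : ∀ e ∈ H.edges, e.card = d)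
    (hl : IsProperChain H l) (hh : l.head? = some A) (hla : l.getLast? = some B) (hAB : A ≠ B)
    (hlen : l.length ≤ d + 1) : ∃ K ∈ H.edges, (A ∩ K).card + 1 = d ∧ (K ∩ B).Nonempty := by
  have hA : l.getD 0 ∅ = A := List.getD_zero_of_head?_eq_some hh
  have hB : l.getD (l.length - 1) ∅ = B := List.getD_length_sub_one_of_getLast?_eq_some hla
  have hpos := hl.1.length_pos
  have htwo : 1 < l.length := by
    by_contra! h
    rw [show l.length - 1 = 0 by omega, hA] at hB
    exact hAB hB
  have hK := hl.1.getD_mem_edges htwo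
  have hBcard : B.card = d := huni B (hB ▸ hl.1.getD_mem_edges (by omega))
  have hstep := hl.2 0 htwo
  have hnear := (hl.card_inter_getD_le huni B (i := 1) (j := l.length - 1) (by omega)
    (by omega)).1
  rw [hA, huni _ hK] at hstep
  rw [hB, inter_self, hBcard] at hnear
  exact ⟨l.getD 1 ∅, hK, hstep, card_pos.mp (by omega)⟩

end Chains

namespace UniformPC

variable {H : SimpleHypergraph V} {d : ℕ} {A B E G K e : Finset V}

lemma disjoint_of_le_edgeDist (hH : UniformPC H d) (hA : A ∈ H.edges) (hB : B ∈ H.edges)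
    (h : (d : ℕ∞) ≤ edgeDist H A B) : Disjoint A B := by
  by_contra hAB
  rw [not_disjoint_iff_nonempty_inter] at hAB
  rw [hH.2 A hA B hB hAB] at h
  have hpos := hAB.card_pos
  have hle : (A ∩ B).card ≤ d := hH.1 A hA ▸ card_le_card inter_subset_left
  norm_cast at h
  omega

lemma edgeDist_le_of_inter_nonempty (hH : UniformPC H d) (hE : E ∈ H.edges)
    (hK : K ∈ H.edges) (hG : G ∈ H.edges) (hEG : Disjoint E G) (hEK : (E ∩ K).card + 1 = d)
    (hKG : (K ∩ G).Nonempty) : edgeDist H E G ≤ d := by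
  obtain ⟨l, hpi, hh, hla, hlen⟩ := exists_isPIChain_of_edgeDist_le (hH.2 K hK G hG hKG).le
  have hKcard := hH.1 K hK
  have hpos := hKG.card_pos
  have hlen' : l.length ≤ d := by omega
  have hEl := hpi.1.notMem_of_disjoint hH.1 hla hlen' hEG
  have hchain := hpi.1.cons hE hEl hh hla hEG (by omega) (by omega)
  have hla' : (E :: l).getLast? = some G := by
    rw [List.getLast?_cons, hla]
    rfl
  calc edgeDist H E G ≤ ((E :: l).length - 1 : ℕ) := edgeDist_le_of_isProperChain hchain rfl hla'
    _ ≤ d := by simpa using hlen'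

lemma le_edgeDist_of_subset_union (hH : UniformPC H d) (hA : A ∈ H.edges) (hB : B ∈ H.edges)
    (hEA : (d : ℕ∞) + 1 ≤ edgeDist H E A) (hEB : (d : ℕ∞) + 1 ≤ edgeDist H E B)
    (heAB : e ⊆ A ∪ B) : (d : ℕ∞) + 1 ≤ edgeDist H E e := by
  by_contra! hclose
  obtain ⟨l, hpi, hh, hla, hlen⟩ :=
    exists_isPIChain_of_edgeDist_le (Order.le_of_lt_add_one hclose)
  have hE : E ∈ H.edges :=
    List.getD_zero_of_head?_eq_some (d := ∅) hh ▸ hpi.1.1.getD_mem_edges hpi.1.1.length_pos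
  have hEe : Disjoint E e := (disjoint_union_right.mpr
    ⟨hH.disjoint_of_le_edgeDist hE hA (le_self_add.trans hEA),
      hH.disjoint_of_le_edgeDist hE hB (le_self_add.trans hEB)⟩).mono_right heAB
  have hEne : E ≠ e := by
    rintro rfl
    have := H.card_ge E hE
    simp_all
  obtain ⟨K, hK, hEK, hKe⟩ := hpi.1.exists_step_inter_nonempty hH.1 hh hla hEne hlen
  have hKfar : ∀ G ∈ H.edges, (d : ℕ∞) + 1 ≤ edgeDist H E G → Disjoint K G := by
    intro G hG hEG
    rw [disjoint_iff_inter_eq_empty, ← not_nonempty_iff_eq_empty]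
    intro hKG
    have := hEG.trans (hH.edgeDist_le_of_inter_nonempty hE hK hG
      (hH.disjoint_of_le_edgeDist hE hG (le_self_add.trans hEG)) hEK hKG)
    norm_cast at this
    omega
  have hKe' : Disjoint K e :=
    (disjoint_union_right.mpr ⟨hKfar A hA hEA, hKfar B hB hEB⟩).mono_right heAB
  exact not_disjoint_iff_nonempty_inter.mpr hKe hKe'

end UniformPC

variable (k : Type*) [Field k]

variable [LinearOrder V]

theorem restrict_uniformPC_general {V : Type*} [DecidableEq V]
    (H : SimpleHypergraph V) (d : ℕ) (hpc : UniformPC H d)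
    (E : Finset V) :
    UniformPC (H.restrict fun F => ((d : ℕ∞) + 1) ≤ edgeDist H E F) d := by
  set H' := H.restrict fun F => ((d : ℕ∞) + 1) ≤ edgeDist H E F
  have huni' : ∀ e ∈ H'.edges, e.card = d := fun e he =>
    hpc.1 e (SimpleHypergraph.mem_restrict_edges.mp he).1
  refine ⟨huni', fun A hA B hB hAB => le_antisymm ?_ (natCast_sub_card_inter_le_edgeDist huni' A B)⟩
  obtain ⟨hAH, hEA⟩ := SimpleHypergraph.mem_restrict_edges.mp hA
  obtain ⟨hBH, hEB⟩ := SimpleHypergraph.mem_restrict_edges.mp hB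
  obtain ⟨l, hpi, hh, hla, hlen⟩ := exists_isPIChain_of_edgeDist_le (hpc.2 A hAH B hBH hAB).le
  have hfar : ∀ e ∈ l, (d : ℕ∞) + 1 ≤ edgeDist H E e := fun e he =>
    hpc.le_edgeDist_of_subset_union hAH hBH hEA hEB (hpi.1.subset_union hpc.1 hh hla hlen he)
  calc edgeDist H' A B ≤ (l.length - 1 : ℕ) := edgeDist_le_of_isPIChain (hpi.restrict hfar) hh hla
    _ ≤ (d - (A ∩ B).card : ℕ) := Nat.cast_le.mpr (by omega)

theorem restrict_uniformPC {V : Type*} [DecidableEq V]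
    (H : SimpleHypergraph V) (d : ℕ) (hpc : UniformPC H d)
    (E : Finset V) (hE : E ∈ H.edges) :
    UniformPC (H.restrict fun F => ((d : ℕ∞) + 1) ≤ edgeDist H E F) d :=
  restrict_uniformPC_general H d hpc E
end
end
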